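/- Let q be a real number with q > 0 and q ≠ 1, and let φ : W^q → W^q be an odd q-derivation of degree s ∈ ℤ, i.e. φ is linear, φ(L_n) ∈ span{G_{n+s}} and φ(G_n) ∈ span{L_{n+s}} for all n ∈ ℤ, and φ([x,y]) = (1/(1+q^{s+1}))·([φ(x),α(y)] + (−1)^{|x|}[α(x),φ(y)]) for all homogeneous x,y ∈ W^q. Then φ is a scalar multiple of the inner q-derivation ad_{G_s} : x ↦ [G_s, x]. Hence (Der W^q)₁ = ⊕_{s∈ℤ} ⟨ad_{G_s}⟩. -/

import Mathlib

/-!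
Write `φ (L n) = e n • G (n + s)` and `φ (G n) = d n • L (n + s)`. The `q`-Leibniz rule on the
pairs `(L n, L m)`, `(L n, G m)`, `(G n, G m)` amounts to three families of scalar equations
in `e` and `d`. As `q > 0` and `q ≠ 1`, `q` is not a root of unity, so the `q`-numbers `{n}` are
pairwise distinct and `1 + qⁿ ≠ 0`; this forces `d = 0` and `e n = c ({n} - {s+1})`, which are
exactly the coefficients of `c • ad_{G_s}`. Conversely `ad_{G_s}` satisfies these equations,
and the `q`-Leibniz rule extends from basis vectors to the graded pieces by bilinearity.
-/

/-- The `q`-number `{n} = (1 - qⁿ)/(1 - q)`. -/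
noncomputable def qInt (q : ℂ) (n : ℤ) : ℂ := (1 - q ^ n) / (1 - q)

/-- The grading of the `q`-deformed Witt superalgebra: even part spanned by the `L n`
(`= b (Sum.inl n)`), odd part spanned by the `G n` (`= b (Sum.inr n)`). -/
def wGr {W : Type*} [AddCommGroup W] [Module ℂ W] (b : Module.Basis (ℤ ⊕ ℤ) ℂ W) :
    ZMod 2 → Submodule ℂ W :=
  fun i => if i = 0 then Submodule.span ℂ (Set.range fun n : ℤ => b (Sum.inl n))
           else Submodule.span ℂ (Set.range fun n : ℤ => b (Sum.inr n))

@[simp] theorem qInt_zero (q : ℂ) : qInt q 0 = 0 := by simp [qInt]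

section QNumbers

variable {q : ℂ}

theorem qInt_one (hq1 : q ≠ 1) : qInt q 1 = 1 := by
  rw [qInt, zpow_one, div_self (sub_ne_zero.2 hq1.symm)]

theorem ne_zero_of_zpow_injective (hq : Function.Injective fun n : ℤ => q ^ n) : q ≠ 0 := by
  rintro rfl
  exact absurd (@hq 1 2 (by simp)) (by norm_num)

theorem ne_one_of_zpow_injective (hq : Function.Injective fun n : ℤ => q ^ n) : q ≠ 1 := by
  rintro rfl
  exact absurd (@hq 0 1 (by simp)) (by norm_num)

theorem one_add_zpow_ne_zero (hq : Function.Injective fun n : ℤ => q ^ n) (n : ℤ) :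
    1 + q ^ n ≠ 0 := by
  intro h
  have hsq : q ^ (n + n) = q ^ (0 : ℤ) := by
    rw [zpow_add₀ (ne_zero_of_zpow_injective hq), eq_neg_of_add_eq_zero_right h]; simp
  have hn : n = 0 := by have := hq hsq; omega
  subst hn
  norm_num at h

theorem qInt_injective (hq : Function.Injective fun n : ℤ => q ^ n) :
    Function.Injective (qInt q) := by
  intro m n h
  have h1q : 1 - q ≠ 0 := sub_ne_zero.2 (ne_one_of_zpow_injective hq).symm
  apply hq
  simp only [qInt, div_left_inj' h1q] at h
  linear_combination -h

theorem qInt_sub_qInt_ne_zero (hq : Function.Injective fun n : ℤ => q ^ n) {m n : ℤ}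
    (h : m ≠ n) : qInt q m - qInt q n ≠ 0 :=
  sub_ne_zero.2 ((qInt_injective hq).ne h)

end QNumbers

/- The coefficient equations imposed by the `q`-Leibniz rule on `(L n, L m)`, `(L n, G m)` and
`(G n, G m)` when `φ (L n) = e n • G (n + s)` and `φ (G n) = d n • L (n + s)`. -/
def RelLL (q : ℂ) (s : ℤ) (e : ℤ → ℂ) (n m : ℤ) : Prop :=
  (qInt q m - qInt q n) * e (n + m) * (1 + q ^ (s + 1)) =
    (1 + q ^ n) * e m * (qInt q (m + s + 1) - qInt q n) -
      e n * (1 + q ^ m) * (qInt q (n + s + 1) - qInt q m)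

def RelLG (q : ℂ) (s : ℤ) (d : ℤ → ℂ) (n m : ℤ) : Prop :=
  (qInt q (m + 1) - qInt q n) * d (n + m) * (1 + q ^ (s + 1)) =
    (1 + q ^ n) * d m * (qInt q (m + s) - qInt q n)

def RelGG (q : ℂ) (s : ℤ) (d : ℤ → ℂ) (n m : ℤ) : Prop :=
  d n * (1 + q ^ (m + 1)) * (qInt q (m + 1) - qInt q (n + s)) +
    (1 + q ^ (n + 1)) * d m * (qInt q (n + 1) - qInt q (m + s)) = 0

section Relations

variable {q : ℂ} {s : ℤ}

theorem RelLL.sub_mul {e e' : ℤ → ℂ} {n m : ℤ} (he : RelLL q s e n m) (he' : RelLL q s e' n m)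
    (c : ℂ) : RelLL q s (fun k => e k - c * e' k) n m := by
  unfold RelLL at *
  linear_combination he - c * he'

theorem relLL_qInt_sub (hq0 : q ≠ 0) (hq1 : q ≠ 1) (n m : ℤ) :
    RelLL q s (fun k => qInt q k - qInt q (s + 1)) n m := by
  have h1q : 1 - q ≠ 0 := sub_ne_zero.2 hq1.symm
  simp only [RelLL, qInt, zpow_add₀ hq0, zpow_one]
  field_simp
  ring

/-- For `s ≠ 1` the diagonal equation `RelGG q s d n n` already kills `d n`; for `s = 1` it is
vacuous and `RelLG` is used instead. -/
theorem eq_zero_of_relLG_of_relGG (hq : Function.Injective fun n : ℤ => q ^ n) {d : ℤ → ℂ}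
    (hLG : ∀ n m, RelLG q s d n m) (hGG : ∀ n m, RelGG q s d n m) (n : ℤ) : d n = 0 := by
  rcases eq_or_ne s 1 with rfl | hs
  · have h1 : ∀ m, m ≠ -1 → d m = 0 := by
      intro m hm
      have h := hLG 0 m
      simp only [RelLG, zero_add, qInt_zero, sub_zero, zpow_zero] at h
      have hX : qInt q (m + 1) * (q ^ ((1 : ℤ) + 1) - 1) ≠ 0 := by
        refine mul_ne_zero (by simpa using qInt_sub_qInt_ne_zero hq (show m + 1 ≠ 0 by omega)) ?_
        exact sub_ne_zero.2 (by simpa using hq.ne (show (1 : ℤ) + 1 ≠ 0 by norm_num))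
      exact (mul_eq_zero.1 (by linear_combination h : d m * _ = 0)).resolve_right hX
    rcases eq_or_ne n (-1) with rfl | hn
    · have h := hLG 2 (-1)
      norm_num [RelLG, h1 1 (by norm_num)] at h
      rcases h with (h | h) | h
      · exact absurd h (one_add_zpow_ne_zero hq 2)
      · exact h
      · exact absurd h (by simpa using qInt_sub_qInt_ne_zero hq (show (2 : ℤ) ≠ 0 by norm_num))
    · exact h1 n hn
  · have h : RelGG q s d n n := hGG n n
    unfold RelGG at h
    have hX : (1 + q ^ (n + 1)) * (qInt q (n + 1) - qInt q (n + s)) ≠ 0 :=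
      mul_ne_zero (one_add_zpow_ne_zero hq _) (qInt_sub_qInt_ne_zero hq (by omega))
    exact (mul_eq_zero.1 (by linear_combination h / 2 : d n * _ = 0)).resolve_right hX

theorem eq_zero_of_relLL_neg_one (hq : Function.Injective fun n : ℤ => q ^ n) {f : ℤ → ℂ}
    (hf : ∀ n m, RelLL q (-1) f n m) (h1 : f 1 = 0) (n : ℤ) : f n = 0 := by
  have hq1 : 1 + q ≠ 0 := by simpa using one_add_zpow_ne_zero hq 1
  have R : ∀ n m, n ≠ m → 2 * f (n + m) = (1 + q ^ n) * f m + (1 + q ^ m) * f n := by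
    intro n m hnm
    have h : RelLL q (-1) f n m := hf n m
    simp only [RelLL, neg_add_cancel, zpow_zero, neg_add_cancel_right] at h
    apply mul_left_cancel₀ (qInt_sub_qInt_ne_zero hq hnm.symm)
    linear_combination h
  have h0 : f 0 = 0 := by
    have h := R 0 1 (by norm_num)
    simp only [zero_add, zpow_zero, zpow_one, h1] at h
    exact (mul_eq_zero.1 (by linear_combination -h : (1 + q) * f 0 = 0)).resolve_left hq1
  have hm1 : f (-1) = 0 := by
    have h := R (-1) 1 (by norm_num)
    simp only [neg_add_cancel, zpow_one, h0, h1] at h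
    exact (mul_eq_zero.1 (by linear_combination -h : (1 + q) * f (-1) = 0)).resolve_left hq1
  -- `f (n + 1) = (1 + q) / 2 * f n` and `f n = (1 + q⁻¹) / 2 * f (n + 1)`, but
  -- `(1 + q) (1 + q⁻¹) ≠ 4`
  have key : ∀ n, n ≠ 1 → n + 1 ≠ -1 → f n = 0 := by
    intro n hn hn'
    have hA := R n 1 hn
    have hB := R (n + 1) (-1) hn'
    rw [h1, zpow_one] at hA
    rw [add_neg_cancel_right, hm1, zpow_neg_one] at hB
    have hX : (q - 1) ^ 2 ≠ 0 := pow_ne_zero 2 (sub_ne_zero.2 (ne_one_of_zpow_injective hq))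
    refine (mul_eq_zero.1 (?_ : f n * (q - 1) ^ 2 = 0)).resolve_right hX
    linear_combination (-2 * q) * hB - (q + 1) * hA +
      (-2 * f (n + 1)) * mul_inv_cancel₀ (ne_zero_of_zpow_injective hq)
  rcases eq_or_ne n (-2) with rfl | hn2
  · have h := R (-2) 1 (by norm_num)
    rw [show (-2 : ℤ) + 1 = -1 by norm_num, hm1, h1, zpow_one] at h
    exact (mul_eq_zero.1 (by linear_combination -h : (1 + q) * f (-2) = 0)).resolve_left hq1
  rcases eq_or_ne n 1 with rfl | hn1
  · exact h1
  exact key n hn1 (by omega)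

/-- For `s ≠ -1` the equation at `m = 0` expresses `e` through `e 0`. For `s = -1` it degenerates
(`{s + 1} = 0`); then one subtracts the solution `e 1 * {n}` and shows that the rest vanishes. -/
theorem exists_eq_mul_qInt_sub_of_relLL (hq : Function.Injective fun n : ℤ => q ^ n)
    {e : ℤ → ℂ} (he : ∀ n m, RelLL q s e n m) :
    ∃ c, ∀ n, e n = c * (qInt q n - qInt q (s + 1)) := by
  have hq0 := ne_zero_of_zpow_injective hq
  have hq1 := ne_one_of_zpow_injective hq
  rcases eq_or_ne s (-1) with rfl | hs
  · refine ⟨e 1, fun n => ?_⟩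
    have hf := fun n m => (he n m).sub_mul (relLL_qInt_sub hq0 hq1 n m) (e 1)
    have hf0 := eq_zero_of_relLL_neg_one hq hf (by simp [qInt_one hq1]) n
    linear_combination hf0
  · have hs1 : qInt q (s + 1) ≠ 0 := by
      simpa using qInt_sub_qInt_ne_zero hq (m := s + 1) (n := 0) (by omega)
    refine ⟨-(e 0 / qInt q (s + 1)), fun n => ?_⟩
    have h : RelLL q s e n 0 := he n 0
    simp only [RelLL, add_zero, zpow_zero, qInt_zero] at h
    have hfac : (1 + q ^ n) * (e n * qInt q (s + 1) - e 0 * (qInt q (s + 1) - qInt q n)) = 0 := by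
      simp only [qInt, zpow_add₀ hq0, zpow_one, zpow_zero] at h ⊢
      linear_combination h
    have hen := (mul_eq_zero.1 hfac).resolve_left (one_add_zpow_ne_zero hq n)
    field_simp
    linear_combination hen

end Relations

theorem LinearMap.eqOn_span₂ {R M N P : Type*} [CommSemiring R] [AddCommMonoid M]
    [AddCommMonoid N] [AddCommMonoid P] [Module R M] [Module R N] [Module R P]
    {f g : M →ₗ[R] N →ₗ[R] P} {S : Set M} {T : Set N}
    (h : ∀ x ∈ S, ∀ y ∈ T, f x y = g x y) {x : M} {y : N}
    (hx : x ∈ Submodule.span R S) (hy : y ∈ Submodule.span R T) : f x y = g x y :=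
  LinearMap.eqOn_span (f := f.flip y) (g := g.flip y)
    (fun _ hx' => LinearMap.eqOn_span (fun _ hy' => h _ hx' _ hy') hy) hx

section QWitt

variable {W : Type*} [AddCommGroup W] [Module ℂ W]

theorem wGr_zero (b : Module.Basis (ℤ ⊕ ℤ) ℂ W) :
    wGr b 0 = Submodule.span ℂ (Set.range fun n : ℤ => b (.inl n)) := rfl

theorem wGr_one (b : Module.Basis (ℤ ⊕ ℤ) ℂ W) :
    wGr b 1 = Submodule.span ℂ (Set.range fun n : ℤ => b (.inr n)) := rfl

theorem inl_mem_wGr_zero (b : Module.Basis (ℤ ⊕ ℤ) ℂ W) (n : ℤ) : b (.inl n) ∈ wGr b 0 :=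
  Submodule.subset_span ⟨n, rfl⟩

theorem inr_mem_wGr_one (b : Module.Basis (ℤ ⊕ ℤ) ℂ W) (n : ℤ) : b (.inr n) ∈ wGr b 1 :=
  Submodule.subset_span ⟨n, rfl⟩

structure IsQWittBasis (q : ℂ) (b : Module.Basis (ℤ ⊕ ℤ) ℂ W) (B : W →ₗ[ℂ] W →ₗ[ℂ] W)
    (α : W →ₗ[ℂ] W) : Prop where
  brLL : ∀ n m : ℤ, B (b (.inl n)) (b (.inl m)) = (qInt q m - qInt q n) • b (.inl (n + m))
  brLG : ∀ n m : ℤ, B (b (.inl n)) (b (.inr m)) =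
    (qInt q (m + 1) - qInt q n) • b (.inr (n + m))
  brGL : ∀ n m : ℤ, B (b (.inr m)) (b (.inl n)) =
    -((qInt q (m + 1) - qInt q n) • b (.inr (n + m)))
  brGG : ∀ n m : ℤ, B (b (.inr n)) (b (.inr m)) = 0
  αL : ∀ n : ℤ, α (b (.inl n)) = (1 + q ^ n) • b (.inl n)
  αG : ∀ n : ℤ, α (b (.inr n)) = (1 + q ^ (n + 1)) • b (.inr n)

def IsOddQLeibnizAt (q : ℂ) (s : ℤ) (B : W →ₗ[ℂ] W →ₗ[ℂ] W) (α φ : W →ₗ[ℂ] W) (i : ZMod 2)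
    (x y : W) : Prop :=
  φ (B x y) = (1 / (1 + q ^ (s + 1))) • (B (φ x) (α y) + ((-1 : ℂ) ^ i.val) • B (α x) (φ y))

def IsOddQLeibniz (q : ℂ) (s : ℤ) (b : Module.Basis (ℤ ⊕ ℤ) ℂ W) (B : W →ₗ[ℂ] W →ₗ[ℂ] W)
    (α φ : W →ₗ[ℂ] W) : Prop :=
  ∀ i j : ZMod 2, ∀ x ∈ wGr b i, ∀ y ∈ wGr b j, IsOddQLeibnizAt q s B α φ i x y

theorem isOddQLeibnizAt_of_mem_span {q : ℂ} {s : ℤ} {B : W →ₗ[ℂ] W →ₗ[ℂ] W} {α φ : W →ₗ[ℂ] W}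
    {i : ZMod 2} {S T : Set W} (h : ∀ x ∈ S, ∀ y ∈ T, IsOddQLeibnizAt q s B α φ i x y) {x y : W}
    (hx : x ∈ Submodule.span ℂ S) (hy : y ∈ Submodule.span ℂ T) :
    IsOddQLeibnizAt q s B α φ i x y := by
  let rhs : W →ₗ[ℂ] W →ₗ[ℂ] W := (1 / (1 + q ^ (s + 1))) •
    ((B.comp φ).compl₂ α + ((-1 : ℂ) ^ i.val) • (B.comp α).compl₂ φ)
  exact LinearMap.eqOn_span₂ (f := B.compr₂ φ) (g := rhs) h hx hy

namespace IsQWittBasis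

variable {q : ℂ} {b : Module.Basis (ℤ ⊕ ℤ) ℂ W} {B : W →ₗ[ℂ] W →ₗ[ℂ] W} {α : W →ₗ[ℂ] W}

theorem ad_inr_inl (hW : IsQWittBasis q b B α) (s n : ℤ) :
    B (b (.inr s)) (b (.inl n)) = (qInt q n - qInt q (s + 1)) • b (.inr (n + s)) := by
  rw [hW.brGL, ← neg_smul, neg_sub]

variable (hW : IsQWittBasis q b B α) {s : ℤ} {φ : W →ₗ[ℂ] W}
include hW

theorem isOddQLeibnizAt_inl_inl_iff {e : ℤ → ℂ}
    (he : ∀ n, φ (b (.inl n)) = e n • b (.inr (n + s))) (hκ : 1 + q ^ (s + 1) ≠ 0) (n m : ℤ) :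
    IsOddQLeibnizAt q s B α φ 0 (b (.inl n)) (b (.inl m)) ↔ RelLL q s e n m := by
  have lhs : φ (B (b (.inl n)) (b (.inl m))) =
      ((qInt q m - qInt q n) * e (n + m)) • b (.inr (n + m + s)) := by
    rw [hW.brLL, map_smul, he, smul_smul]
  have rhs : B (φ (b (.inl n))) (α (b (.inl m))) + B (α (b (.inl n))) (φ (b (.inl m))) =
      ((1 + q ^ n) * e m * (qInt q (m + s + 1) - qInt q n) -
        e n * (1 + q ^ m) * (qInt q (n + s + 1) - qInt q m)) • b (.inr (n + m + s)) := by
    simp only [he, hW.αL, map_smul, LinearMap.smul_apply, hW.brGL, hW.brLG]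
    rw [show m + (n + s) = n + m + s by ring, show n + (m + s) = n + m + s by ring]
    module
  rw [IsOddQLeibnizAt, ZMod.val_zero, pow_zero, one_smul, lhs, rhs, smul_smul,
    (smul_left_injective ℂ (b.ne_zero _)).eq_iff, RelLL]
  field_simp

theorem isOddQLeibnizAt_inl_inr_iff {e d : ℤ → ℂ}
    (he : ∀ n, φ (b (.inl n)) = e n • b (.inr (n + s)))
    (hd : ∀ n, φ (b (.inr n)) = d n • b (.inl (n + s))) (hκ : 1 + q ^ (s + 1) ≠ 0) (n m : ℤ) :
    IsOddQLeibnizAt q s B α φ 0 (b (.inl n)) (b (.inr m)) ↔ RelLG q s d n m := by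
  have lhs : φ (B (b (.inl n)) (b (.inr m))) =
      ((qInt q (m + 1) - qInt q n) * d (n + m)) • b (.inl (n + m + s)) := by
    rw [hW.brLG, map_smul, hd, smul_smul]
  have rhs : B (φ (b (.inl n))) (α (b (.inr m))) + B (α (b (.inl n))) (φ (b (.inr m))) =
      ((1 + q ^ n) * d m * (qInt q (m + s) - qInt q n)) • b (.inl (n + m + s)) := by
    simp only [he, hd, hW.αL, hW.αG, map_smul, LinearMap.smul_apply, hW.brGG, hW.brLL]
    rw [show n + (m + s) = n + m + s by ring]
    module
  rw [IsOddQLeibnizAt, ZMod.val_zero, pow_zero, one_smul, lhs, rhs, smul_smul,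
    (smul_left_injective ℂ (b.ne_zero _)).eq_iff, RelLG]
  field_simp

theorem isOddQLeibnizAt_inr_inr_iff {d : ℤ → ℂ}
    (hd : ∀ n, φ (b (.inr n)) = d n • b (.inl (n + s))) (hκ : 1 + q ^ (s + 1) ≠ 0) (n m : ℤ) :
    IsOddQLeibnizAt q s B α φ 1 (b (.inr n)) (b (.inr m)) ↔ RelGG q s d n m := by
  have rhs : B (φ (b (.inr n))) (α (b (.inr m))) - B (α (b (.inr n))) (φ (b (.inr m))) =
      (d n * (1 + q ^ (m + 1)) * (qInt q (m + 1) - qInt q (n + s)) +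
        (1 + q ^ (n + 1)) * d m * (qInt q (n + 1) - qInt q (m + s))) • b (.inr (n + m + s)) := by
    simp only [hd, hW.αG, map_smul, LinearMap.smul_apply, hW.brLG, hW.brGL]
    rw [show n + s + m = n + m + s by ring, show m + s + n = n + m + s by ring]
    module
  rw [IsOddQLeibnizAt, hW.brGG, map_zero, ZMod.val_one, pow_one, neg_one_smul, ← sub_eq_add_neg,
    rhs, smul_smul, eq_comm, smul_eq_zero, or_iff_left (b.ne_zero _), mul_eq_zero,
    or_iff_right (one_div_ne_zero hκ), RelGG]

theorem isOddQLeibniz_ad (hq0 : q ≠ 0) (hq1 : q ≠ 1) (hκ : 1 + q ^ (s + 1) ≠ 0) :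
    IsOddQLeibniz q s b B α (B (b (.inr s))) := by
  intro i j
  obtain rfl | rfl : i = 0 ∨ i = 1 := by revert i; decide
  all_goals obtain rfl | rfl : j = 0 ∨ j = 1 := by revert j; decide
  all_goals
    intro x hx y hy
    simp only [wGr_zero, wGr_one] at hx hy
    refine isOddQLeibnizAt_of_mem_span ?_ hx hy
    rintro _ ⟨n, rfl⟩ _ ⟨m, rfl⟩
  · exact (hW.isOddQLeibnizAt_inl_inl_iff (hW.ad_inr_inl s) hκ n m).2 (relLL_qInt_sub hq0 hq1 n m)
  all_goals simp [IsOddQLeibnizAt, hW.brLG, hW.brGL, hW.brGG, hW.αL, hW.αG]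

theorem exists_eq_smul_ad (hq : Function.Injective fun n : ℤ => q ^ n)
    (hφL : ∀ n, φ (b (.inl n)) ∈ Submodule.span ℂ {b (.inr (n + s))})
    (hφG : ∀ n, φ (b (.inr n)) ∈ Submodule.span ℂ {b (.inl (n + s))})
    (hφ : IsOddQLeibniz q s b B α φ) : ∃ c : ℂ, φ = c • B (b (.inr s)) := by
  have hκ := one_add_zpow_ne_zero hq (s + 1)
  choose e he using fun n => Submodule.mem_span_singleton.1 (hφL n)
  choose d hd using fun n => Submodule.mem_span_singleton.1 (hφG n)
  replace he n : φ (b (.inl n)) = e n • b (.inr (n + s)) := (he n).symm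
  replace hd n : φ (b (.inr n)) = d n • b (.inl (n + s)) := (hd n).symm
  have hd0 : ∀ n, d n = 0 := eq_zero_of_relLG_of_relGG hq
    (fun n m => (hW.isOddQLeibnizAt_inl_inr_iff he hd hκ n m).1
      (hφ 0 1 _ (inl_mem_wGr_zero b n) _ (inr_mem_wGr_one b m)))
    (fun n m => (hW.isOddQLeibnizAt_inr_inr_iff hd hκ n m).1
      (hφ 1 1 _ (inr_mem_wGr_one b n) _ (inr_mem_wGr_one b m)))
  obtain ⟨c, hc⟩ := exists_eq_mul_qInt_sub_of_relLL hq fun n m =>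
    (hW.isOddQLeibnizAt_inl_inl_iff he hκ n m).1
      (hφ 0 0 _ (inl_mem_wGr_zero b n) _ (inl_mem_wGr_zero b m))
  refine ⟨c, b.ext fun k => ?_⟩
  rcases k with n | n
  · rw [he, hc, LinearMap.smul_apply, hW.ad_inr_inl, smul_smul]
  · rw [hd, hd0, zero_smul, LinearMap.smul_apply, hW.brGG, smul_zero]

end IsQWittBasis

end QWitt

/-- For real `q > 0`, `q ≠ 1`: every odd `q`-derivation of degree `s` of
the `q`-deformed Witt superalgebra is a scalar multiple of the inner `q`-derivation
`ad_{G_s} : x ↦ [G_s, x]`, and `ad_{G_s}` is itself an odd `q`-derivation of degree `s`.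
Hence `(Der W^q)₁ = ⊕_{s ∈ ℤ} ⟨ad_{G_s}⟩`. -/
theorem qWitt_odd_qDerivations
    (q : ℝ) (hq0 : 0 < q) (hq1 : q ≠ 1)
    (W : Type*) [AddCommGroup W] [Module ℂ W] (b : Module.Basis (ℤ ⊕ ℤ) ℂ W)
    (br : W → W → W)
    (hbr1 : ∀ x, IsLinearMap ℂ (br x)) (hbr2 : ∀ y, IsLinearMap ℂ fun x => br x y)
    (α : W → W) (hα : IsLinearMap ℂ α)
    (hLL : ∀ n m : ℤ, br (b (Sum.inl n)) (b (Sum.inl m)) =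
        (qInt q m - qInt q n) • b (Sum.inl (n + m)))
    (hLG : ∀ n m : ℤ, br (b (Sum.inl n)) (b (Sum.inr m)) =
        (qInt q (m + 1) - qInt q n) • b (Sum.inr (n + m)))
    (hGL : ∀ n m : ℤ, br (b (Sum.inr m)) (b (Sum.inl n)) =
        -((qInt q (m + 1) - qInt q n) • b (Sum.inr (n + m))))
    (hGG : ∀ n m : ℤ, br (b (Sum.inr n)) (b (Sum.inr m)) = 0)
    (hαL : ∀ n : ℤ, α (b (Sum.inl n)) = (1 + (q : ℂ) ^ n) • b (Sum.inl n))
    (hαG : ∀ n : ℤ, α (b (Sum.inr n)) = (1 + (q : ℂ) ^ (n + 1)) • b (Sum.inr n))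
    -- φ is an odd q-derivation of degree s
    (s : ℤ) (φ : W → W) (hφ : IsLinearMap ℂ φ)
    (hφL : ∀ n : ℤ, φ (b (Sum.inl n)) ∈ Submodule.span ℂ {b (Sum.inr (n + s))})
    (hφG : ∀ n : ℤ, φ (b (Sum.inr n)) ∈ Submodule.span ℂ {b (Sum.inl (n + s))})
    (hleib : ∀ (i j : ZMod 2), ∀ x ∈ wGr b i, ∀ y ∈ wGr b j,
        φ (br x y) = (1 / (1 + (q : ℂ) ^ (s + 1))) •
          (br (φ x) (α y) + ((-1 : ℂ) ^ i.val) • br (α x) (φ y))) :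
    (∃ c : ℂ, ∀ x : W, φ x = c • br (b (Sum.inr s)) x) ∧
    -- ad_{G_s} is itself an odd q-derivation of degree s
    (∀ n : ℤ, br (b (Sum.inr s)) (b (Sum.inl n)) ∈ Submodule.span ℂ {b (Sum.inr (n + s))}) ∧
    (∀ n : ℤ, br (b (Sum.inr s)) (b (Sum.inr n)) ∈ Submodule.span ℂ {b (Sum.inl (n + s))}) ∧
    (∀ (i j : ZMod 2), ∀ x ∈ wGr b i, ∀ y ∈ wGr b j,
        br (b (Sum.inr s)) (br x y) = (1 / (1 + (q : ℂ) ^ (s + 1))) •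
          (br (br (b (Sum.inr s)) x) (α y) +
            ((-1 : ℂ) ^ i.val) • br (α x) (br (b (Sum.inr s)) y))) := by
  let B : W →ₗ[ℂ] W →ₗ[ℂ] W := LinearMap.mk₂ ℂ br (fun x y z => (hbr2 z).map_add x y)
    (fun c x y => (hbr2 y).map_smul c x) (fun x y z => (hbr1 x).map_add y z)
    (fun c x y => (hbr1 x).map_smul c y)
  have hW : IsQWittBasis (q : ℂ) b B hα.mk' := ⟨hLL, hLG, hGL, hGG, hαL, hαG⟩
  have hq : Function.Injective fun n : ℤ => (q : ℂ) ^ n := fun m n h =>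
    zpow_right_injective₀ hq0 hq1 <| by
      simpa only [← Complex.ofReal_zpow, Complex.ofReal_inj] using h
  obtain ⟨c, hc⟩ := hW.exists_eq_smul_ad hq (φ := hφ.mk') hφL hφG hleib
  refine ⟨⟨c, fun x => LinearMap.congr_fun hc x⟩, fun n => ?_, fun n => ?_,
    hW.isOddQLeibniz_ad (ne_zero_of_zpow_injective hq) (ne_one_of_zpow_injective hq)
      (one_add_zpow_ne_zero hq (s + 1))⟩
  · rw [show br _ _ = B _ _ from rfl, hW.ad_inr_inl]
    exact Submodule.smul_mem _ _ (Submodule.mem_span_singleton_self _)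
  · rw [hGG]
    exact zero_mem _
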